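/- Local maximum principle for nonpositive superharmonic functions (Lemma 6.1). Let U ⊆ ℝ^d be a bounded open set and let ψ : U → ℝ be a locally integrable superharmonic function with ψ ≤ 0 on U. Then for every r > 0 and every p > 0 there exists a constant C = C(d, p, r, U), independent of ψ, such that for every x₀ with the closed ball B(x₀, 2r) contained in U, one has sup_{x ∈ B(x₀,r)} |ψ(x)| ≤ C · ( (1/|B(x₀,2r)|) ∫_{B(x₀,2r)} |ψ(y)|^p dy )^{1/p}. -/

import Mathlib

open MeasureTheory Metric Set

noncomputable def laplacian {d : ℕ} (f : EuclideanSpace ℝ (Fin d) → ℝ)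
    (x : EuclideanSpace ℝ (Fin d)) : ℝ :=
  ∑ i : Fin d, iteratedFDeriv ℝ 2 f x
    ![EuclideanSpace.single i (1:ℝ), EuclideanSpace.single i (1:ℝ)]

/-- A function is superharmonic on an open set `U` if it is lower semicontinuous on `U`
and satisfies the super-mean-value property on every closed ball contained in `U`. -/
def Superharmonic {d : ℕ} (U : Set (EuclideanSpace ℝ (Fin d)))
    (ψ : EuclideanSpace ℝ (Fin d) → ℝ) : Prop :=
  LowerSemicontinuousOn ψ U ∧
  ∀ x ∈ U, ∀ ρ : ℝ, 0 < ρ → closedBall x ρ ⊆ U →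
    ⨍ y in closedBall x ρ, ψ y ≤ ψ x

/-
Put `f = |ψ| = -ψ`; superharmonicity of `ψ` says `f y ≤ ⨍ f` over every ball `B(y, ρ) ⊆ U`.
For `p ≤ 1`, let `S` be the supremum over `B(x₀, 2r)` of the weighted function
`(2r - |y - x₀|)^(d/p) f y`. At a point `y` at distance `2ρ` from the sphere `∂B(x₀, 2r)`,
`f ≤ S ρ^(-d/p)` on `B(y, ρ)`, so the mean value inequality and `f ≤ M^(1-p) f^p` for `f ≤ M` give
`(2ρ)^(d/p) f y ≤ 2^(d/p) (2r)^d S^(1-p) ⨍_{B(x₀,2r)} f^p`: the exponent `d/p` is exactly the one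
for which the powers of `ρ` cancel. Taking the supremum and absorbing `S^(1-p)` bounds `S^p`, hence
`f` on `B(x₀, r)`. For `p > 1`, combine the case `p = 1` with Jensen's inequality.
-/

lemma le_rpow_one_sub_mul_rpow {a M p : ℝ} (ha : 0 ≤ a) (haM : a ≤ M) (hp : p ≤ 1) :
    a ≤ M ^ (1 - p) * a ^ p := by
  rcases ha.eq_or_lt with rfl | ha
  · have := ha.trans haM
    positivity
  calc a = a ^ (1 - p) * a ^ p := by rw [← Real.rpow_add ha, sub_add_cancel, Real.rpow_one]
    _ ≤ M ^ (1 - p) * a ^ p := by gcongr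

lemma rpow_le_of_le_mul_rpow_one_sub {S K p : ℝ} (hS : 0 ≤ S) (hK : 0 ≤ K) (hp : 0 < p)
    (h : S ≤ K * S ^ (1 - p)) : S ^ p ≤ K := by
  rcases hS.eq_or_lt with rfl | hS
  · rwa [Real.zero_rpow hp.ne']
  refine le_of_mul_le_mul_right ?_ (Real.rpow_pos_of_pos hS (1 - p))
  rwa [← Real.rpow_add hS, add_sub_cancel, Real.rpow_one]

section Measure

variable {α : Type*} [MeasurableSpace α] {μ : Measure α} {f : α → ℝ} {s : Set α} {p : ℝ}

lemma MeasureTheory.IntegrableOn.rpow_of_bddAbove (hf : IntegrableOn f s μ) (hs : MeasurableSet s)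
    (hμs : μ s ≠ ⊤) (hf0 : ∀ y ∈ s, 0 ≤ f y) (hbdd : BddAbove (f '' s)) (hp : 0 ≤ p) :
    IntegrableOn (fun y => f y ^ p) s μ := by
  obtain ⟨M, hM⟩ := hbdd
  refine Integrable.mono' (integrableOn_const (C := M ^ p) hμs)
    (hf.aestronglyMeasurable.aemeasurable.pow_const p).aestronglyMeasurable ?_
  refine (ae_restrict_iff' hs).2 (.of_forall fun y hy => ?_)
  rw [Real.norm_of_nonneg (Real.rpow_nonneg (hf0 y hy) p)]
  exact Real.rpow_le_rpow (hf0 y hy) (hM (mem_image_of_mem f hy)) hp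

lemma setIntegral_le_rpow_mul_setIntegral_rpow (hs : MeasurableSet s) (hf : IntegrableOn f s μ)
    (hfp : IntegrableOn (fun y => f y ^ p) s μ) {M : ℝ} (hf0 : ∀ y ∈ s, 0 ≤ f y)
    (hfM : ∀ y ∈ s, f y ≤ M) (hp : p ≤ 1) :
    ∫ y in s, f y ∂μ ≤ M ^ (1 - p) * ∫ y in s, f y ^ p ∂μ := by
  rw [← integral_const_mul]
  exact setIntegral_mono_on hf (hfp.const_mul _) hs
    fun y hy => le_rpow_one_sub_mul_rpow (hf0 y hy) (hfM y hy) hp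

lemma setAverage_nonneg (hs : MeasurableSet s) (hf0 : ∀ y ∈ s, 0 ≤ f y) :
    0 ≤ ⨍ y in s, f y ∂μ :=
  integral_nonneg_of_ae (Measure.ae_smul_measure ((ae_restrict_iff' hs).2 (.of_forall hf0)) _)

lemma setAverage_le_rpow_setAverage_rpow (hs : MeasurableSet s) (hμs : μ s ≠ 0)
    (hμs' : μ s ≠ ⊤) (hf : IntegrableOn f s μ) (hfp : IntegrableOn (fun y => f y ^ p) s μ)
    (hf0 : ∀ y ∈ s, 0 ≤ f y) (hp : 1 ≤ p) :
    ⨍ y in s, f y ∂μ ≤ (⨍ y in s, f y ^ p ∂μ) ^ (1 / p) := by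
  have hjensen := (convexOn_rpow hp).map_set_average_le
    (Real.continuous_rpow_const (by linarith)).continuousOn isClosed_Ici hμs hμs'
    ((ae_restrict_iff' hs).2 (.of_forall hf0)) hf hfp
  have hmean0 := setAverage_nonneg (μ := μ) hs hf0
  rwa [one_div, Real.le_rpow_inv_iff_of_pos hmean0 ((Real.rpow_nonneg hmean0 p).trans hjensen)
    (by linarith)]

end Measure

section SubMeanValueOn

variable {X : Type*} [PseudoMetricSpace X] [MeasurableSpace X]

def SubMeanValueOn (μ : Measure X) (f : X → ℝ) (s : Set X) : Prop :=
  ∀ y ρ, 0 < ρ → closedBall y ρ ⊆ s → f y ≤ ⨍ z in closedBall y ρ, f z ∂μ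

lemma SubMeanValueOn.mono {μ : Measure X} {f : X → ℝ} {s t : Set X} (hf : SubMeanValueOn μ f s)
    (hts : t ⊆ s) : SubMeanValueOn μ f t :=
  fun y ρ hρ hy => hf y ρ hρ (hy.trans hts)

end SubMeanValueOn

section HaarMeasure

open Module

variable {E : Type*} [NormedAddCommGroup E] [NormedSpace ℝ E] [FiniteDimensional ℝ E]
  [MeasurableSpace E] [BorelSpace E] {μ : Measure E} [μ.IsAddHaarMeasure]
  {f : E → ℝ} {x₀ : E} {r R p : ℝ}

lemma SubMeanValueOn.pow_mul_le_of_le (hf : SubMeanValueOn μ f (ball x₀ R))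
    (hf0 : ∀ y ∈ closedBall x₀ R, 0 ≤ f y) (hfi : IntegrableOn f (closedBall x₀ R) μ)
    (hfp : IntegrableOn (fun y => f y ^ p) (closedBall x₀ R) μ) (hp : p ≤ 1)
    {y : E} {ρ M : ℝ} (hρ : 0 < ρ) (hyρ : closedBall y ρ ⊆ ball x₀ R)
    (hfM : ∀ z ∈ closedBall y ρ, f z ≤ M) :
    ρ ^ finrank ℝ E * f y ≤
      R ^ finrank ℝ E * M ^ (1 - p) * ⨍ z in closedBall x₀ R, f z ^ p ∂μ := by
  have hsub : closedBall y ρ ⊆ closedBall x₀ R := hyρ.trans ball_subset_closedBall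
  have hy : y ∈ closedBall y ρ := mem_closedBall_self hρ.le
  have hR : 0 < R := pos_of_mem_ball (hyρ hy)
  have hc : 0 < μ.real (closedBall 0 1) :=
    ENNReal.toReal_pos (measure_closedBall_pos μ 0 one_pos).ne' measure_closedBall_lt_top.ne
  have hM : 0 ≤ M := (hf0 y (hsub hy)).trans (hfM y hy)
  have hmean := hf y ρ hρ hyρ
  rw [setAverage_eq, smul_eq_mul, Measure.addHaar_real_closedBall' μ y hρ.le] at hmean
  have hinterp : ∫ z in closedBall y ρ, f z ∂μ ≤ M ^ (1 - p) * ∫ z in closedBall y ρ, f z ^ p ∂μ :=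
    setIntegral_le_rpow_mul_setIntegral_rpow measurableSet_closedBall (hfi.mono_set hsub)
      (hfp.mono_set hsub) (fun z hz => hf0 z (hsub hz)) hfM hp
  have hgrow : ∫ z in closedBall y ρ, f z ^ p ∂μ ≤ ∫ z in closedBall x₀ R, f z ^ p ∂μ :=
    setIntegral_mono_set hfp ((ae_restrict_iff' measurableSet_closedBall).2
      (.of_forall fun z hz => Real.rpow_nonneg (hf0 z hz) p)) hsub.eventuallyLE
  rw [setAverage_eq, smul_eq_mul, Measure.addHaar_real_closedBall' μ x₀ hR.le]
  set c := μ.real (closedBall 0 1)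
  calc ρ ^ finrank ℝ E * f y
      ≤ ρ ^ finrank ℝ E * ((ρ ^ finrank ℝ E * c)⁻¹ * ∫ z in closedBall y ρ, f z ∂μ) := by
        gcongr
    _ = c⁻¹ * ∫ z in closedBall y ρ, f z ∂μ := by field_simp
    _ ≤ c⁻¹ * (M ^ (1 - p) * ∫ z in closedBall x₀ R, f z ^ p ∂μ) := by
        gcongr
        exact hinterp.trans (by gcongr)
    _ = R ^ finrank ℝ E * M ^ (1 - p) *
          ((R ^ finrank ℝ E * c)⁻¹ * ∫ z in closedBall x₀ R, f z ^ p ∂μ) := by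
        field_simp

lemma SubMeanValueOn.rpow_mul_le_of_forall_rpow_mul_le (hf : SubMeanValueOn μ f (ball x₀ R))
    (hf0 : ∀ y ∈ closedBall x₀ R, 0 ≤ f y) (hfi : IntegrableOn f (closedBall x₀ R) μ)
    (hfp : IntegrableOn (fun y => f y ^ p) (closedBall x₀ R) μ) (hp0 : 0 < p) (hp : p ≤ 1) {S : ℝ}
    (hS : ∀ z ∈ ball x₀ R, (R - dist z x₀) ^ (finrank ℝ E / p) * f z ≤ S)
    {y : E} (hy : y ∈ ball x₀ R) :
    (R - dist y x₀) ^ (finrank ℝ E / p) * f y ≤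
      2 ^ (finrank ℝ E / p) * R ^ finrank ℝ E * S ^ (1 - p) *
        ⨍ z in closedBall x₀ R, f z ^ p ∂μ := by
  set α : ℝ := finrank ℝ E / p
  set A := ⨍ z in closedBall x₀ R, f z ^ p ∂μ
  set ρ := (R - dist y x₀) / 2 with hρ_def
  have hρ : 0 < ρ := by linarith [mem_ball.1 hy]
  have hdist : ∀ z ∈ closedBall y ρ, ρ ≤ R - dist z x₀ := fun z hz => by
    linarith [dist_triangle z y x₀, mem_closedBall.1 hz]
  have hball : closedBall y ρ ⊆ ball x₀ R := fun z hz => mem_ball.2 (by linarith [hdist z hz])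
  have hS0 : 0 ≤ S := le_trans (mul_nonneg (Real.rpow_nonneg (by linarith [mem_ball.1 hy]) α)
    (hf0 y (ball_subset_closedBall hy))) (hS y hy)
  have hfM : ∀ z ∈ closedBall y ρ, f z ≤ S / ρ ^ α := fun z hz => by
    have hz0 := hf0 z (ball_subset_closedBall (hball hz))
    rw [le_div_iff₀' (by positivity)]
    calc ρ ^ α * f z ≤ (R - dist z x₀) ^ α * f z := by gcongr; exact hdist z hz
      _ ≤ S := hS z (hball hz)
  have hlocal := hf.pow_mul_le_of_le hf0 hfi hfp hp hρ hball hfM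
  rw [Real.div_rpow hS0 (by positivity), ← Real.rpow_mul hρ.le] at hlocal
  -- `α = d + α (1 - p)` is what makes the powers of `ρ` cancel
  have hsplit : ρ ^ α = ρ ^ (α * (1 - p)) * ρ ^ finrank ℝ E := by
    rw [← Real.rpow_natCast, ← Real.rpow_add hρ]
    congr 1
    linear_combination div_mul_cancel₀ (finrank ℝ E : ℝ) hp0.ne'
  calc (R - dist y x₀) ^ α * f y = 2 ^ α * (ρ ^ (α * (1 - p)) * (ρ ^ finrank ℝ E * f y)) := by
        rw [show R - dist y x₀ = 2 * ρ by ring, Real.mul_rpow zero_le_two hρ.le, hsplit]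
        ring
    _ ≤ 2 ^ α * (ρ ^ (α * (1 - p)) *
          (R ^ finrank ℝ E * (S ^ (1 - p) / ρ ^ (α * (1 - p))) * A)) := by gcongr
    _ = 2 ^ α * R ^ finrank ℝ E * S ^ (1 - p) * A := by
        field_simp

lemma SubMeanValueOn.pow_mul_rpow_le_average (hf : SubMeanValueOn μ f (ball x₀ R))
    (hf0 : ∀ y ∈ closedBall x₀ R, 0 ≤ f y) (hfi : IntegrableOn f (closedBall x₀ R) μ)
    (hbdd : BddAbove (f '' closedBall x₀ R)) (hp0 : 0 < p) (hp : p ≤ 1)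
    {x : E} (hx : x ∈ ball x₀ R) :
    (R - dist x x₀) ^ finrank ℝ E * f x ^ p ≤
      2 ^ (finrank ℝ E / p) * R ^ finrank ℝ E * ⨍ z in closedBall x₀ R, f z ^ p ∂μ := by
  set α : ℝ := finrank ℝ E / p
  set A := ⨍ z in closedBall x₀ R, f z ^ p ∂μ
  set w := fun z => (R - dist z x₀) ^ α * f z
  have hR : 0 < R := pos_of_mem_ball hx
  have hfp := hfi.rpow_of_bddAbove measurableSet_closedBall measure_closedBall_lt_top.ne hf0
    hbdd hp0.le
  have hgap : ∀ z ∈ ball x₀ R, 0 ≤ R - dist z x₀ := fun z hz => by linarith [mem_ball.1 hz]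
  have hw0 : ∀ z ∈ ball x₀ R, 0 ≤ w z := fun z hz =>
    mul_nonneg (Real.rpow_nonneg (hgap z hz) α) (hf0 z (ball_subset_closedBall hz))
  have hw_bdd : BddAbove (w '' ball x₀ R) := by
    obtain ⟨B, hB⟩ := hbdd
    refine ⟨R ^ α * B, forall_mem_image.2 fun z hz => ?_⟩
    exact mul_le_mul (Real.rpow_le_rpow (hgap z hz) (by linarith [dist_nonneg (x := z) (y := x₀)])
      (by positivity)) (hB (mem_image_of_mem f (ball_subset_closedBall hz)))
      (hf0 z (ball_subset_closedBall hz)) (Real.rpow_nonneg hR.le α)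
  set S := sSup (w '' ball x₀ R)
  have hwS : ∀ z ∈ ball x₀ R, w z ≤ S := fun z hz => le_csSup hw_bdd (mem_image_of_mem w hz)
  have hA0 : 0 ≤ A :=
    setAverage_nonneg measurableSet_closedBall fun z hz => Real.rpow_nonneg (hf0 z hz) p
  have hSp : S ^ p ≤ 2 ^ α * R ^ finrank ℝ E * A := by
    refine rpow_le_of_le_mul_rpow_one_sub ((hw0 x hx).trans (hwS x hx)) (by positivity) hp0 ?_
    refine csSup_le ((nonempty_ball.2 hR).image w) (forall_mem_image.2 fun z hz => ?_)
    exact (hf.rpow_mul_le_of_forall_rpow_mul_le hf0 hfi hfp hp0 hp hwS hz).trans_eq (by ring)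
  calc (R - dist x x₀) ^ finrank ℝ E * f x ^ p = w x ^ p := by
        rw [Real.mul_rpow (Real.rpow_nonneg (hgap x hx) α) (hf0 x (ball_subset_closedBall hx)),
          ← Real.rpow_mul (hgap x hx), div_mul_cancel₀ _ hp0.ne', Real.rpow_natCast]
    _ ≤ S ^ p := by gcongr; exacts [hw0 x hx, hwS x hx]
    _ ≤ _ := hSp

lemma SubMeanValueOn.le_mul_average_rpow_of_le_one (hf : SubMeanValueOn μ f (ball x₀ (2 * r)))
    (hf0 : ∀ y ∈ closedBall x₀ (2 * r), 0 ≤ f y) (hfi : IntegrableOn f (closedBall x₀ (2 * r)) μ)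
    (hbdd : BddAbove (f '' closedBall x₀ (2 * r))) (hr : 0 < r) (hp0 : 0 < p) (hp : p ≤ 1)
    {x : E} (hx : x ∈ closedBall x₀ r) :
    f x ≤ (2 ^ (finrank ℝ E / p) * 2 ^ finrank ℝ E) ^ (1 / p) *
      (⨍ z in closedBall x₀ (2 * r), f z ^ p ∂μ) ^ (1 / p) := by
  set A := ⨍ z in closedBall x₀ (2 * r), f z ^ p ∂μ
  have hdist := mem_closedBall.1 hx
  have hfx : 0 ≤ f x := hf0 x (closedBall_subset_closedBall (by linarith) hx)
  have hweighted := hf.pow_mul_rpow_le_average hf0 hfi hbdd hp0 hp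
    (closedBall_subset_ball (by linarith) hx)
  have hA0 : 0 ≤ A :=
    setAverage_nonneg measurableSet_closedBall fun z hz => Real.rpow_nonneg (hf0 z hz) p
  have hfxp : f x ^ p ≤ 2 ^ (finrank ℝ E / p) * 2 ^ finrank ℝ E * A := by
    refine le_of_mul_le_mul_left ?_ (pow_pos hr (finrank ℝ E))
    calc r ^ finrank ℝ E * f x ^ p ≤ (2 * r - dist x x₀) ^ finrank ℝ E * f x ^ p := by
          gcongr; linarith
      _ ≤ _ := hweighted.trans_eq (by ring)
  rw [← Real.mul_rpow (by positivity) hA0, one_div, Real.le_rpow_inv_iff_of_pos hfx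
    (by positivity) hp0]
  exact hfxp

lemma SubMeanValueOn.le_mul_average_rpow (hf : SubMeanValueOn μ f (ball x₀ (2 * r)))
    (hf0 : ∀ y ∈ closedBall x₀ (2 * r), 0 ≤ f y) (hfi : IntegrableOn f (closedBall x₀ (2 * r)) μ)
    (hbdd : BddAbove (f '' closedBall x₀ (2 * r))) (hr : 0 < r) (hp0 : 0 < p)
    {x : E} (hx : x ∈ closedBall x₀ r) :
    f x ≤ (2 ^ (finrank ℝ E / min p 1) * 2 ^ finrank ℝ E) ^ (1 / min p 1) *
      (⨍ z in closedBall x₀ (2 * r), f z ^ p ∂μ) ^ (1 / p) := by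
  rcases le_total p 1 with hp | hp
  · rw [min_eq_left hp]
    exact hf.le_mul_average_rpow_of_le_one hf0 hfi hbdd hr hp0 hp hx
  have hjensen := setAverage_le_rpow_setAverage_rpow measurableSet_closedBall
    (measure_closedBall_pos μ x₀ (by linarith)).ne' measure_closedBall_lt_top.ne hfi
    (hfi.rpow_of_bddAbove measurableSet_closedBall measure_closedBall_lt_top.ne hf0 hbdd hp0.le)
    hf0 hp
  have hmean := hf.le_mul_average_rpow_of_le_one hf0 hfi hbdd hr one_pos le_rfl hx
  simp only [Real.rpow_one, div_one] at hmean
  rw [min_eq_right hp, div_one, div_one, Real.rpow_one]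
  exact hmean.trans (by gcongr)

end HaarMeasure

lemma LowerSemicontinuousOn.bddAbove_abs_image_of_nonpos {X : Type*} [TopologicalSpace X]
    {ψ : X → ℝ} {K : Set X} (hψ : LowerSemicontinuousOn ψ K) (hK : IsCompact K)
    (hneg : ∀ x ∈ K, ψ x ≤ 0) : BddAbove ((fun y => |ψ y|) '' K) := by
  obtain ⟨m, hm⟩ := hψ.bddBelow_of_isCompact hK
  refine ⟨-m, forall_mem_image.2 fun y hy => ?_⟩
  rw [abs_of_nonpos (hneg y hy)]
  exact neg_le_neg (hm (mem_image_of_mem ψ hy))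

section Superharmonic

variable {d : ℕ} {U : Set (EuclideanSpace ℝ (Fin d))} {ψ : EuclideanSpace ℝ (Fin d) → ℝ}

lemma Superharmonic.subMeanValueOn_abs (hψ : Superharmonic U ψ) (hneg : ∀ x ∈ U, ψ x ≤ 0) :
    SubMeanValueOn volume (fun y => |ψ y|) U := by
  intro y ρ hρ hyU
  change |ψ y| ≤ ⨍ z in closedBall y ρ, |ψ z|
  have habs : ∀ z ∈ closedBall y ρ, |ψ z| = -ψ z := fun z hz => abs_of_nonpos (hneg z (hyU hz))
  rw [habs y (mem_closedBall_self hρ.le), setAverage_congr_fun measurableSet_closedBall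
    (.of_forall habs), average_neg, neg_le_neg_iff]
  exact hψ.2 y (hyU (mem_closedBall_self hρ.le)) ρ hρ hyU

lemma Superharmonic.abs_le_mul_average_rpow (hψ : Superharmonic U ψ)
    (hloc : LocallyIntegrableOn ψ U) (hneg : ∀ x ∈ U, ψ x ≤ 0) {x₀ x : EuclideanSpace ℝ (Fin d)}
    {r p : ℝ} (hr : 0 < r) (hp : 0 < p) (hU : closedBall x₀ (2 * r) ⊆ U)
    (hx : x ∈ closedBall x₀ r) :
    |ψ x| ≤ (2 ^ (d / min p 1) * 2 ^ d) ^ (1 / min p 1) *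
      (⨍ y in closedBall x₀ (2 * r), |ψ y| ^ p) ^ (1 / p) := by
  have hK := isCompact_closedBall x₀ (2 * r)
  have := ((hψ.subMeanValueOn_abs hneg).mono (ball_subset_closedBall.trans hU)).le_mul_average_rpow
    (fun y _ => abs_nonneg (ψ y)) (hloc.integrableOn_compact_subset hU hK).abs
    ((hψ.1.mono hU).bddAbove_abs_image_of_nonpos hK fun y hy => hneg y (hU hy)) hr hp hx
  rwa [finrank_euclideanSpace_fin] at this

end Superharmonic

theorem local_maximum_principle_general {d : ℕ}
    (U : Set (EuclideanSpace ℝ (Fin d)))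
    (r p : ℝ) (hr : 0 < r) (hp : 0 < p) :
    ∃ C : ℝ, 0 < C ∧
      ∀ ψ : EuclideanSpace ℝ (Fin d) → ℝ,
        LocallyIntegrableOn ψ U → Superharmonic U ψ → (∀ x ∈ U, ψ x ≤ 0) →
        ∀ x₀ : EuclideanSpace ℝ (Fin d), closedBall x₀ (2 * r) ⊆ U →
          ∀ x ∈ closedBall x₀ r,
            |ψ x| ≤ C * (⨍ y in closedBall x₀ (2 * r), |ψ y| ^ p) ^ (1 / p) :=
  ⟨_, by positivity, fun _ hloc hψ hneg _ hU _ hx =>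
    hψ.abs_le_mul_average_rpow hloc hneg hr hp hU hx⟩

/-- **Local maximum principle for nonpositive superharmonic functions** (Lemma 6.1).
Let `U ⊆ ℝ^d` be a bounded open set and `ψ` a locally integrable superharmonic function on `U`
with `ψ ≤ 0` on `U`.  Then for every `r > 0` and `p > 0` there is a constant
`C = C(d, p, r, U)`, independent of `ψ`'s values, such that whenever the closed ball
`B(x₀, 2r)` is contained in `U`,
`sup_{B(x₀,r)} |ψ| ≤ C ((1/|B(x₀,2r)|) ∫_{B(x₀,2r)} |ψ|^p)^{1/p}`. -/
theorem local_maximum_principle {d : ℕ}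
    (U : Set (EuclideanSpace ℝ (Fin d))) (hUopen : IsOpen U) (hUbdd : Bornology.IsBounded U)
    (r p : ℝ) (hr : 0 < r) (hp : 0 < p) :
    ∃ C : ℝ, 0 < C ∧
      ∀ ψ : EuclideanSpace ℝ (Fin d) → ℝ,
        LocallyIntegrableOn ψ U → Superharmonic U ψ → (∀ x ∈ U, ψ x ≤ 0) →
        ∀ x₀ : EuclideanSpace ℝ (Fin d), closedBall x₀ (2 * r) ⊆ U →
          ∀ x ∈ closedBall x₀ r,
            |ψ x| ≤ C * (⨍ y in closedBall x₀ (2 * r), |ψ y| ^ p) ^ (1 / p) :=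
  local_maximum_principle_general U r p hr hp
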